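/- Let Φ be an irreducible reduced crystallographic simply-laced root system with base Δ and highest root θ, and let α ∈ Δ be a Heisenberg root. Then: (i) Ψ_α = Φ_α ∪ {θ − α}; in particular θ − α is a root with c_α(θ−α) = 1 and ⟨θ−α, α⟩ = −1; and (ii) for every ε ∈ Ψ_α, the vector ε − α is not a root. -/

import Mathlib

open scoped InnerProductSpace

namespace PaperRS

variable {E : Type*} [NormedAddCommGroup E] [InnerProductSpace ℝ E]

/-- A reduced crystallographic simply-laced root system, normalized so that every root has
squared length `2` (hence `⟪δ, ε⟫` is the Cartan integer `⟨δ, ε^∨⟩`). -/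
structure IsRootSystem (Φ : Set E) : Prop where
  finite : Φ.Finite
  nonzero : (0 : E) ∉ Φ
  span_top : Submodule.span ℝ Φ = ⊤
  norm_two : ∀ α ∈ Φ, ⟪α, α⟫_ℝ = 2
  reduced : ∀ α ∈ Φ, ∀ t : ℝ, t • α ∈ Φ → t = 1 ∨ t = -1
  cartan_int : ∀ α ∈ Φ, ∀ β ∈ Φ, ∃ n : ℤ, ⟪α, β⟫_ℝ = (n : ℝ)
  reflect_mem : ∀ α ∈ Φ, ∀ β ∈ Φ, β - ⟪β, α⟫_ℝ • α ∈ Φ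

/-- Irreducibility: `Φ` is nonempty and cannot be split into two mutually orthogonal parts. -/
def IsIrreducible (Φ : Set E) : Prop :=
  Φ.Nonempty ∧ ∀ Φ₁ Φ₂ : Set E, Φ = Φ₁ ∪ Φ₂ →
    (∀ a ∈ Φ₁, ∀ b ∈ Φ₂, ⟪a, b⟫_ℝ = 0) → Φ₁ = ∅ ∨ Φ₂ = ∅

/-- The reflection in (the hyperplane orthogonal to) a root `α` of squared length `2`. -/
def sRefl (α : E) : Function.End E := fun x => x - ⟪x, α⟫_ℝ • α

/-- The group generated by the reflections in the elements of `S`; since every reflection is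
an involution, the submonoid generated by the reflections coincides with the generated group. -/
def genBy (S : Set E) : Submonoid (Function.End E) :=
  Submonoid.closure (sRefl '' S)

/-- The Weyl group of `Φ`: the group generated by the reflections in all the roots. -/
abbrev WeylGroup (Φ : Set E) : Submonoid (Function.End E) := genBy Φ

/-- A base (set of simple roots) of `Φ`, together with the (unique) integer coefficients
`coeff δ γ` of each root `δ` with respect to the simple roots. -/
structure Base (Φ : Set E) where
  Δ : Finset E
  coeff : E → E → ℤ
  subset : ↑Δ ⊆ Φ
  indep : LinearIndependent ℝ (fun γ : {x : E // x ∈ Δ} => (γ : E))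
  expand : ∀ δ ∈ Φ, δ = ∑ γ ∈ Δ, (coeff δ γ : ℝ) • γ
  sign : ∀ δ ∈ Φ, (∀ γ ∈ Δ, 0 ≤ coeff δ γ) ∨ (∀ γ ∈ Δ, coeff δ γ ≤ 0)

variable {Φ : Set E}

/-- `θ` is the highest root of `Φ` with respect to the base `B`. -/
def IsHighest (B : Base Φ) (θ : E) : Prop :=
  θ ∈ Φ ∧ ∀ δ ∈ Φ, ∀ γ ∈ B.Δ, B.coeff δ γ ≤ B.coeff θ γ

/-- `α` is a Heisenberg simple root: the highest root `θ` has `α`-coefficient `2`, and every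
root other than `±θ` has `α`-coefficient in `{-1, 0, 1}`. -/
def IsHeisenberg (B : Base Φ) (θ α : E) : Prop :=
  B.coeff θ α = 2 ∧
    ∀ δ ∈ Φ, δ ≠ θ → δ ≠ -θ →
      B.coeff δ α = -1 ∨ B.coeff δ α = 0 ∨ B.coeff δ α = 1

/-- `α` is an extreme simple root with (unique) neighbour `β`. -/
def IsExtreme (B : Base Φ) (α β : E) : Prop :=
  β ∈ B.Δ ∧ β ≠ α ∧ ⟪α, β⟫_ℝ ≠ 0 ∧
    ∀ γ ∈ B.Δ, γ ≠ α → ⟪α, γ⟫_ℝ ≠ 0 → γ = β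

/-- `Φ_α`: the roots with `α`-coefficient `1` that are orthogonal to `α`. -/
def PhiSet (B : Base Φ) (α : E) : Set E :=
  {ε ∈ Φ | B.coeff ε α = 1 ∧ ⟪ε, α⟫_ℝ = 0}

/-- `Ψ_α`: the roots `ε` with `α`-coefficient `1` and `⟪ε, α⟫ ≤ 0`. -/
def PsiSet (B : Base Φ) (α : E) : Set E :=
  {ε ∈ Φ | B.coeff ε α = 1 ∧ ⟪ε, α⟫_ℝ ≤ 0}

/-!
Expanding `⟪θ, θ⟫ = 2` along the base, in which all coefficients of `θ` are positive, gives a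
simple root `γ` with `⟪θ, γ⟫ = 1`, so `θ - γ` is a root. For `γ ≠ α` its `α`-coefficient would
be `2`, which the Heisenberg condition reserves for `θ`; hence `⟪θ, α⟫ = 1` and `θ - α` is a root.
Likewise, a root `ε` with `α`-coefficient `1` and `⟪ε, α⟫ = -1` makes `ε + α` a root of
`α`-coefficient `2`, so `ε + α = θ`. Finally `‖ε - α‖² = 4 - 2⟪ε, α⟫ ≥ 4` when `⟪ε, α⟫ ≤ 0`,
too long for a root.
-/

namespace Base

variable (B : Base Φ)

lemma coeff_eq_of_eq_sum {δ : E} (hδ : δ ∈ Φ) {r : E → ℝ} (h : δ = ∑ γ ∈ B.Δ, r γ • γ)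
    {γ : E} (hγ : γ ∈ B.Δ) : (B.coeff δ γ : ℝ) = r γ :=
  (linearIndepOn_finset_iffₛ (v := id)).mp B.indep _ r ((B.expand δ hδ).symm.trans h) γ hγ

open scoped Classical in
lemma coeff_simple {γ β : E} (hγ : γ ∈ B.Δ) (hβ : β ∈ B.Δ) :
    B.coeff γ β = if β = γ then 1 else 0 := by
  have h := B.coeff_eq_of_eq_sum (B.subset hγ) (r := fun x => if x = γ then 1 else 0)
    (by simp [ite_smul, hγ]) hβ
  split_ifs at h ⊢ <;> exact_mod_cast h

lemma coeff_self {γ : E} (hγ : γ ∈ B.Δ) : B.coeff γ γ = 1 := by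
  simp [B.coeff_simple hγ hγ]

lemma coeff_neg {δ : E} (hδ : δ ∈ Φ) (hnδ : -δ ∈ Φ) {γ : E} (hγ : γ ∈ B.Δ) :
    B.coeff (-δ) γ = -B.coeff δ γ := by
  have h := B.coeff_eq_of_eq_sum hnδ (r := fun x => -(B.coeff δ x : ℝ))
    (by simp only [neg_smul, Finset.sum_neg_distrib, ← B.expand δ hδ]) hγ
  exact_mod_cast h

lemma coeff_sub {δ ε : E} (hδ : δ ∈ Φ) (hε : ε ∈ Φ) (hδε : δ - ε ∈ Φ) {γ : E}
    (hγ : γ ∈ B.Δ) : B.coeff (δ - ε) γ = B.coeff δ γ - B.coeff ε γ := by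
  have h := B.coeff_eq_of_eq_sum hδε (r := fun x => (B.coeff δ x : ℝ) - B.coeff ε x)
    (by simp only [sub_smul, Finset.sum_sub_distrib, ← B.expand δ hδ, ← B.expand ε hε]) hγ
  exact_mod_cast h

end Base

namespace IsRootSystem

variable {δ ε : E}

lemma neg_mem (hΦ : IsRootSystem Φ) (hδ : δ ∈ Φ) : -δ ∈ Φ := by
  have h := hΦ.reflect_mem δ hδ δ hδ
  rwa [hΦ.norm_two δ hδ, show δ - (2 : ℝ) • δ = -δ by module] at h

lemma inner_sub_sub_self (hΦ : IsRootSystem Φ) (hδ : δ ∈ Φ) (hε : ε ∈ Φ) :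
    ⟪δ - ε, δ - ε⟫_ℝ = 4 - 2 * ⟪δ, ε⟫_ℝ := by
  rw [inner_sub_left, inner_sub_right, inner_sub_right, hΦ.norm_two δ hδ, hΦ.norm_two ε hε,
    real_inner_comm ε δ]
  ring

lemma inner_lt_two (hΦ : IsRootSystem Φ) (hδ : δ ∈ Φ) (hε : ε ∈ Φ) (hne : δ ≠ ε) :
    ⟪δ, ε⟫_ℝ < 2 := by
  have := real_inner_self_pos.mpr (sub_ne_zero.mpr hne)
  linarith [hΦ.inner_sub_sub_self hδ hε]

lemma inner_eq_neg_one_or_zero_or_one (hΦ : IsRootSystem Φ) (hδ : δ ∈ Φ) (hε : ε ∈ Φ)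
    (hne : δ ≠ ε) (hne' : δ ≠ -ε) : ⟪δ, ε⟫_ℝ = -1 ∨ ⟪δ, ε⟫_ℝ = 0 ∨ ⟪δ, ε⟫_ℝ = 1 := by
  obtain ⟨n, hn⟩ := hΦ.cartan_int δ hδ ε hε
  have hlt : (n : ℝ) < 2 := hn ▸ hΦ.inner_lt_two hδ hε hne
  have hgt : (-2 : ℝ) < n := by
    have := hΦ.inner_lt_two hδ (hΦ.neg_mem hε) hne'
    rw [inner_neg_right, hn] at this
    linarith
  have : n = -1 ∨ n = 0 ∨ n = 1 := by
    have : n < 2 := by exact_mod_cast hlt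
    have : -2 < n := by exact_mod_cast hgt
    omega
  rcases this with rfl | rfl | rfl <;> simp [hn]

lemma sub_mem_of_inner_eq_one (hΦ : IsRootSystem Φ) (hδ : δ ∈ Φ) (hε : ε ∈ Φ)
    (h : ⟪δ, ε⟫_ℝ = 1) : δ - ε ∈ Φ := by
  simpa [h] using hΦ.reflect_mem ε hε δ hδ

lemma add_mem_of_inner_eq_neg_one (hΦ : IsRootSystem Φ) (hδ : δ ∈ Φ) (hε : ε ∈ Φ)
    (h : ⟪δ, ε⟫_ℝ = -1) : δ + ε ∈ Φ := by
  simpa [h] using hΦ.reflect_mem ε hε δ hδ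

lemma sub_notMem_of_inner_nonpos (hΦ : IsRootSystem Φ) (hδ : δ ∈ Φ) (hε : ε ∈ Φ)
    (h : ⟪δ, ε⟫_ℝ ≤ 0) : δ - ε ∉ Φ := fun hmem => by
  linarith [hΦ.norm_two _ hmem, hΦ.inner_sub_sub_self hδ hε]

lemma exists_simple_inner_pos (hΦ : IsRootSystem Φ) (B : Base Φ) (hδ : δ ∈ Φ)
    (hpos : ∀ γ ∈ B.Δ, 0 ≤ B.coeff δ γ) : ∃ γ ∈ B.Δ, 0 < ⟪δ, γ⟫_ℝ := by
  have hsum : ∑ γ ∈ B.Δ, (B.coeff δ γ : ℝ) * ⟪δ, γ⟫_ℝ = 2 := by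
    simp_rw [← real_inner_smul_right, ← inner_sum, ← B.expand δ hδ, hΦ.norm_two δ hδ]
  by_contra! hno
  have : ∑ γ ∈ B.Δ, (B.coeff δ γ : ℝ) * ⟪δ, γ⟫_ℝ ≤ 0 :=
    Finset.sum_nonpos fun γ hγ => mul_nonpos_of_nonneg_of_nonpos
      (by exact_mod_cast hpos γ hγ) (hno γ hγ)
  linarith

end IsRootSystem

lemma IsHighest.one_le_coeff {B : Base Φ} {θ γ : E} (hθ : IsHighest B θ) (hγ : γ ∈ B.Δ) :
    1 ≤ B.coeff θ γ := by
  simpa [B.coeff_self hγ] using hθ.2 γ (B.subset hγ) γ hγ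

namespace IsHeisenberg

variable {B : Base Φ} {θ α : E}

lemma eq_of_coeff_eq_two (hH : IsHeisenberg B θ α) (hθ : IsHighest B θ) (hα : α ∈ B.Δ)
    {δ : E} (hδ : δ ∈ Φ) (h : B.coeff δ α = 2) : δ = θ := by
  by_contra hne
  have hnθ : δ ≠ -θ := by
    rintro rfl
    rw [B.coeff_neg hθ.1 hδ hα, hH.1] at h
    omega
  rcases hH.2 δ hδ hne hnθ with h' | h' | h' <;> omega

lemma inner_eq_one (hH : IsHeisenberg B θ α) (hΦ : IsRootSystem Φ) (hθ : IsHighest B θ)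
    (hα : α ∈ B.Δ) : ⟪θ, α⟫_ℝ = 1 := by
  obtain ⟨γ, hγ, hpos⟩ := hΦ.exists_simple_inner_pos B hθ.1
    fun γ hγ => zero_le_one.trans (hθ.one_le_coeff hγ)
  have hγΦ := B.subset hγ
  have hθγ : θ ≠ γ := by
    rintro rfl
    have h := B.coeff_simple hγ hα
    have := hH.1
    split_ifs at h <;> omega
  have hθnγ : θ ≠ -γ := by
    rintro rfl
    rw [inner_neg_left, hΦ.norm_two γ hγΦ] at hpos
    linarith
  have hθγ1 : ⟪θ, γ⟫_ℝ = 1 := by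
    rcases hΦ.inner_eq_neg_one_or_zero_or_one hθ.1 hγΦ hθγ hθnγ with h | h | h
    · linarith
    · linarith
    · exact h
  by_cases hγα : γ = α
  · rwa [hγα] at hθγ1
  exfalso
  have hmem := hΦ.sub_mem_of_inner_eq_one hθ.1 hγΦ hθγ1
  have hcoeff : B.coeff (θ - γ) α = 2 := by
    rw [B.coeff_sub hθ.1 hγΦ hmem hα, B.coeff_simple hγ hα, if_neg (Ne.symm hγα), hH.1]
    rfl
  have := hH.eq_of_coeff_eq_two hθ hα hmem hcoeff
  exact hΦ.nonzero (sub_eq_self.mp this ▸ hγΦ)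

lemma sub_mem (hH : IsHeisenberg B θ α) (hΦ : IsRootSystem Φ) (hθ : IsHighest B θ)
    (hα : α ∈ B.Δ) : θ - α ∈ Φ :=
  hΦ.sub_mem_of_inner_eq_one hθ.1 (B.subset hα) (hH.inner_eq_one hΦ hθ hα)

lemma coeff_sub_eq_one (hH : IsHeisenberg B θ α) (hΦ : IsRootSystem Φ) (hθ : IsHighest B θ)
    (hα : α ∈ B.Δ) : B.coeff (θ - α) α = 1 := by
  rw [B.coeff_sub hθ.1 (B.subset hα) (hH.sub_mem hΦ hθ hα) hα, hH.1,
    B.coeff_self hα]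
  rfl

lemma inner_sub_eq_neg_one (hH : IsHeisenberg B θ α) (hΦ : IsRootSystem Φ) (hθ : IsHighest B θ)
    (hα : α ∈ B.Δ) : ⟪θ - α, α⟫_ℝ = -1 := by
  rw [inner_sub_left, hH.inner_eq_one hΦ hθ hα, hΦ.norm_two α (B.subset hα)]
  norm_num

lemma eq_sub_of_mem_psiSet (hH : IsHeisenberg B θ α) (hΦ : IsRootSystem Φ) (hθ : IsHighest B θ)
    (hα : α ∈ B.Δ) {ε : E} (hε : ε ∈ PsiSet B α) (h0 : ⟪ε, α⟫_ℝ ≠ 0) :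
    ε = θ - α := by
  obtain ⟨hεΦ, hc, hle⟩ := hε
  have hαΦ := B.subset hα
  have hεα : ε ≠ α := by
    rintro rfl
    linarith [hΦ.norm_two ε hεΦ]
  have hεnα : ε ≠ -α := by
    rintro rfl
    rw [B.coeff_neg hαΦ hεΦ hα, B.coeff_self hα] at hc
    omega
  have h1 : ⟪ε, α⟫_ℝ = -1 := by
    rcases hΦ.inner_eq_neg_one_or_zero_or_one hεΦ hαΦ hεα hεnα with h | h | h
    · exact h
    · exact absurd h h0
    · linarith
  have hmem := hΦ.add_mem_of_inner_eq_neg_one hεΦ hαΦ h1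
  have hcoeff : B.coeff (ε + α) α = 2 := by
    have := B.coeff_sub hmem hαΦ (by simpa using hεΦ) hα
    rw [add_sub_cancel_right, hc, B.coeff_self hα] at this
    omega
  rw [← hH.eq_of_coeff_eq_two hθ hα hmem hcoeff, add_sub_cancel_right]

end IsHeisenberg

theorem psiSet_eq_phiSet_union_singleton_general
    (hΦ : IsRootSystem Φ) (B : Base Φ)
    {θ α : E} (hθ : IsHighest B θ) (hα : α ∈ B.Δ) (hH : IsHeisenberg B θ α) :
    PsiSet B α = PhiSet B α ∪ {θ - α} ∧
      (θ - α ∈ Φ ∧ B.coeff (θ - α) α = 1 ∧ ⟪θ - α, α⟫_ℝ = -1) ∧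
      ∀ ε ∈ PsiSet B α, ε - α ∉ Φ := by
  have hroot := hH.sub_mem hΦ hθ hα
  have hcoeff := hH.coeff_sub_eq_one hΦ hθ hα
  have hinner := hH.inner_sub_eq_neg_one hΦ hθ hα
  refine ⟨?_, ⟨hroot, hcoeff, hinner⟩, fun ε hε => hΦ.sub_notMem_of_inner_nonpos hε.1
    (B.subset hα) hε.2.2⟩
  ext ε
  constructor
  · intro hε
    by_cases h0 : ⟪ε, α⟫_ℝ = 0
    · exact Or.inl ⟨hε.1, hε.2.1, h0⟩
    · exact Or.inr (hH.eq_sub_of_mem_psiSet hΦ hθ hα hε h0)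
  · rintro (⟨hεΦ, hc, h0⟩ | rfl)
    · exact ⟨hεΦ, hc, h0.le⟩
    · exact ⟨hroot, hcoeff, hinner.le.trans (by norm_num)⟩

/-- For a Heisenberg simple root `α`: (i) `Ψ_α = Φ_α ∪ {θ - α}`, and `θ - α` is a root with
`α`-coefficient `1` and `⟪θ - α, α⟫ = -1`; (ii) for every `ε ∈ Ψ_α`, `ε - α` is not a root. -/
theorem psiSet_eq_phiSet_union_singleton
    (hΦ : IsRootSystem Φ) (hirr : IsIrreducible Φ) (B : Base Φ)
    {θ α : E} (hθ : IsHighest B θ) (hα : α ∈ B.Δ) (hH : IsHeisenberg B θ α) :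
    PsiSet B α = PhiSet B α ∪ {θ - α} ∧
      (θ - α ∈ Φ ∧ B.coeff (θ - α) α = 1 ∧ ⟪θ - α, α⟫_ℝ = -1) ∧
      ∀ ε ∈ PsiSet B α, ε - α ∉ Φ :=
  psiSet_eq_phiSet_union_singleton_general hΦ B hθ hα hH

end PaperRS
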